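/- arXiv:1103.1662 — 2 statements merged into one kernel-verified Lean document; each statement's English description precedes it below -/
import Mathlib

section
/- Let n ≥ 2 and let D_1, ..., D_n be pairwise coprime integers with each D_i ≥ n+2. Set δ = (1/2 - 1/(n+1) - 1/2 · max_i(1/D_i)) / (D_1·...·D_n). Then every velocity vector (v_1, ..., v_n) with |v_i - 1/D_i| < δ for all i satisfies the Lonely Runner Conjecture: there exists t > 0 with ‖t·v_i‖ ≥ 1/(n+1) for all i. -/
/-!
Take `T < ∏ Dᵢ` with `T ≡ ⌊Dᵢ/2⌋ (mod Dᵢ)` for every `i` (Chinese remainder theorem). Then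
`T / Dᵢ` lies within `1 / (2 Dᵢ)` of a half-integer, and replacing `1 / Dᵢ` by `vᵢ` moves
`T vᵢ` by less than `T δ ≤ ∏ Dⱼ · δ`. The choice of `δ` makes the sum of the two errors at most
`1/2 - 1/(n+1)`, so every runner is at distance at least `1/(n+1)` from the nearest integer.
-/

/-- Distance from a real number to the nearest integer. -/
noncomputable def distNearestInt (x : ℝ) : ℝ := |x - round x|

lemma half_le_abs_int_add_half_sub_int (q m : ℤ) : 1 / 2 ≤ |(q : ℝ) + 1 / 2 - m| := by
  rcases le_or_gt m q with h | h
  · have : (m : ℝ) ≤ q := by exact_mod_cast h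
    exact le_abs.mpr (Or.inl (by linarith))
  · have : (q : ℝ) + 1 ≤ m := by exact_mod_cast h
    exact le_abs.mpr (Or.inr (by linarith))

lemma half_sub_abs_sub_int_add_half_le_distNearestInt (x : ℝ) (q : ℤ) :
    1 / 2 - |x - ((q : ℝ) + 1 / 2)| ≤ distNearestInt x := by
  have h := half_le_abs_int_add_half_sub_int q (round x)
  have htri : |(q : ℝ) + 1 / 2 - round x| ≤ |x - ((q : ℝ) + 1 / 2)| + |x - round x| := by
    rw [abs_sub_comm x]
    exact abs_sub_le _ x _
  unfold distNearestInt
  linarith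

lemma exists_lt_prod_mod_eq {ι : Type*} [Fintype ι] {D a : ι → ℕ}
    (hcop : Pairwise (Function.onFun Nat.Coprime D)) (ha : ∀ i, a i < D i) :
    ∃ T < ∏ i, D i, ∀ i, T % D i = a i := by
  have hD : ∀ i ∈ Finset.univ, D i ≠ 0 := fun i _ => (ha i).ne_bot
  have hcop' : Set.Pairwise (Finset.univ : Finset ι) (Function.onFun Nat.Coprime D) :=
    fun i _ j _ hij => hcop hij
  refine ⟨Nat.chineseRemainderOfFinset a D _ hD hcop',
    Nat.chineseRemainderOfFinset_lt_prod a D hD hcop', fun i => ?_⟩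
  rw [(Nat.chineseRemainderOfFinset a D _ hD hcop').2 i (Finset.mem_univ i)]
  exact Nat.mod_eq_of_lt (ha i)

lemma abs_natCast_div_sub_half_le {T d : ℕ} (hd : 0 < d) (hT : T % d = d / 2) :
    |(T : ℝ) / d - ((T / d : ℕ) + 1 / 2)| ≤ 1 / (2 * d) := by
  have hsplit : (T : ℝ) = d * (T / d : ℕ) + (d / 2 : ℕ) := by
    exact_mod_cast (hT ▸ Nat.div_add_mod T d).symm
  have hlow : (d : ℝ) ≤ 2 * (d / 2 : ℕ) + 1 := by exact_mod_cast (by omega : d ≤ 2 * (d / 2) + 1)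
  have hup : 2 * ((d / 2 : ℕ) : ℝ) ≤ d := by exact_mod_cast Nat.mul_div_le d 2
  have heq : (T : ℝ) / d - ((T / d : ℕ) + 1 / 2) = (2 * ((d / 2 : ℕ) : ℝ) - d) / (2 * d) := by
    rw [hsplit]; field_simp; ring
  rw [heq, abs_div, abs_of_pos (by positivity : (0 : ℝ) < 2 * d)]
  gcongr
  exact abs_le.mpr ⟨by linarith, by linarith⟩

lemma le_distNearestInt_mul_of_mod_eq_half {T d : ℕ} (hd : 0 < d) (hT : T % d = d / 2) (v : ℝ) :
    1 / 2 - 1 / (2 * d) - T * |v - 1 / d| ≤ distNearestInt (T * v) := by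
  have hsplit : (T : ℝ) * v - ((T / d : ℕ) + 1 / 2) =
      ((T : ℝ) / d - ((T / d : ℕ) + 1 / 2)) + T * (v - 1 / d) := by
    field_simp; ring
  have hclose : |(T : ℝ) * v - ((T / d : ℕ) + 1 / 2)| ≤ 1 / (2 * d) + T * |v - 1 / d| := by
    rw [hsplit]
    calc _ ≤ |(T : ℝ) / d - ((T / d : ℕ) + 1 / 2)| + |(T : ℝ) * (v - 1 / d)| := abs_add_le _ _
      _ ≤ _ := by
        rw [abs_mul, Nat.abs_cast]
        gcongr
        exact abs_natCast_div_sub_half_le hd hT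
  have := half_sub_abs_sub_int_add_half_le_distNearestInt (T * v) (T / d : ℕ)
  rw [Int.cast_natCast] at this
  linarith

theorem lonely_runner_open_box (n : ℕ) (hn : 2 ≤ n) (D : Fin n → ℕ)
    (hcop : ∀ i j, i ≠ j → Nat.Coprime (D i) (D j)) (hD : ∀ i, n + 2 ≤ D i)
    (δ : ℝ)
    (hδ : δ = (1 / 2 - 1 / (n + 1) -
        (1 / 2) * ((Finset.univ : Finset (Fin n)).sup'
          ⟨⟨0, by omega⟩, Finset.mem_univ _⟩ fun i => (1 : ℝ) / (D i))) /
        ∏ i, (D i : ℝ))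
    (v : Fin n → ℝ) (hv : ∀ i, |v i - 1 / (D i : ℝ)| < δ) :
    ∃ t : ℝ, 0 < t ∧ ∀ i, (1 : ℝ) / (n + 1) ≤ distNearestInt (t * v i) := by
  set M := (Finset.univ : Finset (Fin n)).sup' ⟨⟨0, by omega⟩, Finset.mem_univ _⟩
    fun i => (1 : ℝ) / (D i)
  have hDpos : ∀ i, 0 < D i := fun i => by linarith [hD i]
  obtain ⟨T, hTlt, hTmod⟩ := exists_lt_prod_mod_eq (a := fun i => D i / 2)
    (fun i j hij => hcop i j hij) fun i => Nat.div_lt_self (hDpos i) one_lt_two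
  have hTpos : 0 < T := by
    by_contra! hT0
    have h0 := hTmod ⟨0, by omega⟩
    have h2 := hD ⟨0, by omega⟩
    rw [Nat.le_zero.mp hT0, Nat.zero_mod] at h0
    omega
  have hPδ : (∏ i, (D i : ℝ)) * δ = 1 / 2 - 1 / (n + 1) - 1 / 2 * M := by
    rw [hδ, mul_div_cancel₀]
    exact Finset.prod_ne_zero_iff.mpr fun i _ => by exact_mod_cast (hDpos i).ne'
  refine ⟨T, by exact_mod_cast hTpos, fun i => ?_⟩
  have hrunner := le_distNearestInt_mul_of_mod_eq_half (hDpos i) (hTmod i) (v i)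
  have hMi : (1 : ℝ) / D i ≤ M := Finset.le_sup' (fun j => (1 : ℝ) / D j) (Finset.mem_univ i)
  have hhalf : (1 : ℝ) / (2 * D i) = 1 / 2 * (1 / D i) := (one_div_mul_one_div _ _).symm
  have hdrift : (T : ℝ) * |v i - 1 / D i| ≤ (∏ j, (D j : ℝ)) * δ := by
    have hδ0 : 0 ≤ δ := (abs_nonneg _).trans (hv i).le
    have hTP : (T : ℝ) ≤ ∏ j, (D j : ℝ) := by exact_mod_cast hTlt.le
    calc (T : ℝ) * |v i - 1 / D i| ≤ T * δ := by gcongr; exact (hv i).le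
      _ ≤ _ := by gcongr
  linarith
end

section
/- The set of velocity vectors in (0,∞)^n satisfying the Lonely Runner Conjecture (with the strict property that there exists t with ‖t·v_i‖ ≥ 1/(n+1) for all i) contains an open neighborhood of every point (1/D_1, ..., 1/D_n) with D_1,...,D_n pairwise coprime integers all at least n+2. -/
/-!
Pick by the Chinese remainder theorem a positive integer time `T` with `T ≡ ⌊D_i/2⌋ (mod D_i)` for
every `i`. Then `‖T/D_i‖ = ⌊D_i/2⌋/D_i ≥ 1/2 - 1/(2 D_i)`, which exceeds `1/(n+1)` because
`D_i ≥ n + 2` and `n ≥ 2`. As `‖·‖` is continuous, the strict inequalities at the fixed time `T`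
persist for all velocity vectors near `(1/D_1, …, 1/D_n)`.
-/

open Function

theorem distNearestInt_eq_norm_coe (x : ℝ) : distNearestInt x = ‖(x : UnitAddCircle)‖ :=
  UnitAddCircle.norm_eq.symm

@[fun_prop]
theorem continuous_distNearestInt : Continuous distNearestInt := by
  simp only [funext distNearestInt_eq_norm_coe]
  exact continuous_norm.comp (AddCircle.continuous_mk' 1)

theorem isOpen_setOf_forall_lt_distNearestInt_mul {ι : Type*} [Finite ι] (c t : ℝ) :
    IsOpen {v : ι → ℝ | ∀ i, c < distNearestInt (t * v i)} := by
  simp only [Set.ofPred_forall]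
  exact isOpen_iInter_of_finite fun i => isOpen_lt continuous_const (by fun_prop)

theorem Nat.exists_pos_forall_modEq_of_pairwise_coprime {ι : Type*} [Fintype ι] {D : ι → ℕ}
    (hD : ∀ i, D i ≠ 0) (hcop : Pairwise (Coprime on D)) (a : ι → ℕ) :
    ∃ T : ℕ, 0 < T ∧ ∀ i, T ≡ a i [MOD D i] := by
  obtain ⟨k, hk⟩ := chineseRemainderOfFinset a D Finset.univ (fun i _ => hD i)
    (fun i _ j _ hij => hcop hij)
  have hprod : 0 < ∏ i, D i := Finset.prod_pos fun i _ => Nat.pos_of_ne_zero (hD i)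
  refine ⟨k + ∏ i, D i, by omega, fun i => ?_⟩
  have hprod_mod : ∏ j, D j ≡ 0 [MOD D i] :=
    Nat.modEq_zero_iff_dvd.2 (Finset.dvd_prod_of_mem D (Finset.mem_univ i))
  simpa using (hk i (Finset.mem_univ i)).add hprod_mod

theorem distNearestInt_natCast_mul_one_div_of_modEq_half {T d : ℕ} (hd : 0 < d)
    (h : T ≡ d / 2 [MOD d]) : distNearestInt (T * (1 / d)) = ((d / 2 : ℕ) : ℝ) / d := by
  have hmod : T % d = d / 2 := Eq.trans h (Nat.mod_eq_of_lt (Nat.div_lt_self hd one_lt_two))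
  rw [mul_one_div, distNearestInt, abs_sub_round_div_natCast_eq, hmod]
  congr 3
  omega

theorem one_div_succ_lt_half_div {n d : ℕ} (hn : 2 ≤ n) (hd : n + 2 ≤ d) :
    (1 : ℝ) / (n + 1) < ((d / 2 : ℕ) : ℝ) / d := by
  have key : d < (d / 2) * (n + 1) := by
    have : d ≤ 2 * (d / 2) + 1 := by omega
    have : 2 ≤ d / 2 := by omega
    nlinarith
  rw [div_lt_div_iff₀ (by positivity) (by norm_cast; omega), one_mul]
  exact_mod_cast key

theorem lonely_runner_open_nbhd (n : ℕ) (hn : 2 ≤ n) (D : Fin n → ℕ)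
    (hcop : ∀ i j, i ≠ j → Nat.Coprime (D i) (D j)) (hD : ∀ i, n + 2 ≤ D i) :
    ∃ U : Set (Fin n → ℝ), IsOpen U ∧ (fun i => (1 : ℝ) / (D i)) ∈ U ∧
      U ⊆ {v : Fin n → ℝ |
        ∃ t : ℝ, 0 < t ∧ ∀ i, (1 : ℝ) / (n + 1) ≤ distNearestInt (t * v i)} := by
  have hDpos : ∀ i, 0 < D i := fun i => by linarith [hD i]
  obtain ⟨T, hTpos, hT⟩ := Nat.exists_pos_forall_modEq_of_pairwise_coprime
    (fun i => (hDpos i).ne') (fun i j => hcop i j) (fun i => D i / 2)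
  refine ⟨{v | ∀ i, 1 / (n + 1) < distNearestInt (T * v i)},
    isOpen_setOf_forall_lt_distNearestInt_mul _ _, fun i => ?_,
    fun v hv => ⟨T, by exact_mod_cast hTpos, fun i => (hv i).le⟩⟩
  rw [distNearestInt_natCast_mul_one_div_of_modEq_half (hDpos i) (hT i)]
  exact one_div_succ_lt_half_div hn (hD i)
end
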